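/- Let k₁, k₂, k₃ ∈ ℤ, j₁, j₂, j₃ ∈ ℤ₊ and suppose f₁, f₂, f₃ ∈ L²(ℝ²) with fᵢ supported in I_{kᵢ} × Ĩ_{jᵢ}. Set k̃ = min(k₁,k₂,k₃) + med(k₁,k₂,k₃). If J(f₁,f₂,f₃) ≠ 0 then either max(j₁,j₂,j₃) ∈ [k̃-5, k̃+5], or max(j₁,j₂,j₃) ≥ k̃+5 and max(j₁,j₂,j₃) - med(j₁,j₂,j₃) ≤ 5. -/

import Mathlib

open MeasureTheory

noncomputable section

/-- Benjamin–Ono dispersion relation. -/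
def ω (ξ : ℝ) : ℝ := -ξ * |ξ|

/-- Resonance function. -/
def Ωres (ξ₁ ξ₂ : ℝ) : ℝ := -ω (ξ₁ + ξ₂) + ω ξ₁ + ω ξ₂

/-- Dyadic frequency annulus `I_k`. -/
def Idy (k : ℤ) : Set ℝ := {ξ : ℝ | (2 : ℝ) ^ (k - 1) ≤ |ξ| ∧ |ξ| ≤ (2 : ℝ) ^ (k + 1)}

/-- Modified dyadic interval `Ĩ_j`. -/
def Itil (j : ℕ) : Set ℝ := if j = 0 then Set.Icc (-2 : ℝ) 2 else Idy (j : ℤ)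

/-- The trilinear convolution-type form `J`. -/
def J (f g h : ℝ × ℝ → ℂ) : ℂ :=
  ∫ ξ₁ : ℝ, ∫ ξ₂ : ℝ, ∫ μ₁ : ℝ, ∫ μ₂ : ℝ,
    f (ξ₁, μ₁) * g (ξ₂, μ₂) * h (ξ₁ + ξ₂, μ₁ + μ₂ + Ωres ξ₁ ξ₂)

/-- The `L²` norm (as a real number) of a function on `ℝ²`. -/
def L2norm (f : ℝ × ℝ → ℂ) : ℝ := (eLpNorm f 2 volume).toReal

/-! Where the integrand of `J` is nonzero, `μ₃ = μ₁ + μ₂ + Ω` with `|Ω| = 2 · min · med` of the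
frequencies, so `2 ^ (k̃ - 1) ≤ |Ω| ≤ 2 ^ (k̃ + 3)`. Thus the modulations cannot all be small compared
with `2 ^ k̃`, and a modulation much larger than `2 ^ k̃` must be balanced by a second one of
comparable size. -/

lemma exists_mem_support_of_J_ne_zero {f g h : ℝ × ℝ → ℂ} (hJ : J f g h ≠ 0) :
    ∃ ξ₁ ξ₂ μ₁ μ₂, (ξ₁, μ₁) ∈ Function.support f ∧ (ξ₂, μ₂) ∈ Function.support g ∧
      (ξ₁ + ξ₂, μ₁ + μ₂ + Ωres ξ₁ ξ₂) ∈ Function.support h := by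
  obtain ⟨ξ₁, hJ⟩ := exists_ne_zero_of_integral_ne_zero hJ
  obtain ⟨ξ₂, hJ⟩ := exists_ne_zero_of_integral_ne_zero hJ
  obtain ⟨μ₁, hJ⟩ := exists_ne_zero_of_integral_ne_zero hJ
  obtain ⟨μ₂, hJ⟩ := exists_ne_zero_of_integral_ne_zero hJ
  exact ⟨ξ₁, ξ₂, μ₁, μ₂, left_ne_zero_of_mul (left_ne_zero_of_mul hJ),
    right_ne_zero_of_mul (left_ne_zero_of_mul hJ), right_ne_zero_of_mul hJ⟩

/- In each sign pattern the largest of `|ξ₁|`, `|ξ₂|`, `|ξ₁ + ξ₂|` is the sum of the other two,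
and `Ωres ξ₁ ξ₂` is `± 2` times their product. -/
lemma abs_Ωres (ξ₁ ξ₂ : ℝ) :
    |Ωres ξ₁ ξ₂| = 2 * min (|ξ₁| * |ξ₂|) (min (|ξ₁| * |ξ₁ + ξ₂|) (|ξ₂| * |ξ₁ + ξ₂|)) := by
  rcases le_total 0 ξ₁ with h₁ | h₁ <;> rcases le_total 0 ξ₂ with h₂ | h₂ <;>
    rcases le_total 0 (ξ₁ + ξ₂) with h₃ | h₃ <;>
    simp only [Ωres, ω, abs_of_nonneg, abs_of_nonpos, h₁, h₂, h₃] <;>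
    (first
      | rw [min_eq_left (le_min (by nlinarith) (by nlinarith))]
      | rw [min_eq_right (min_le_of_left_le (by nlinarith)), min_eq_left (by nlinarith)]
      | rw [min_eq_right (min_le_of_right_le (by nlinarith)), min_eq_right (by nlinarith)]) <;>
    first
      | rw [abs_of_nonneg (by nlinarith)]; ring1
      | rw [abs_of_nonpos (by nlinarith)]; ring1
      | rw [abs_of_nonneg (by nlinarith)]; nlinarith

section Dyadic

variable {a b : ℤ} {x y : ℝ}

lemma two_zpow_le_abs_mul_abs_of_mem_Idy (hx : x ∈ Idy a) (hy : y ∈ Idy b) :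
    (2 : ℝ) ^ (a + b - 2) ≤ |x| * |y| :=
  calc (2 : ℝ) ^ (a + b - 2) = 2 ^ (a - 1) * 2 ^ (b - 1) := by
        rw [← zpow_add₀ two_ne_zero]; ring_nf
    _ ≤ |x| * |y| := mul_le_mul hx.1 hy.1 (by positivity) (abs_nonneg x)

lemma abs_mul_abs_le_two_zpow_of_mem_Idy (hx : x ∈ Idy a) (hy : y ∈ Idy b) :
    |x| * |y| ≤ (2 : ℝ) ^ (a + b + 2) :=
  calc |x| * |y| ≤ 2 ^ (a + 1) * 2 ^ (b + 1) := mul_le_mul hx.2 hy.2 (abs_nonneg y) (by positivity)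
    _ = 2 ^ (a + b + 2) := by rw [← zpow_add₀ two_ne_zero]; ring_nf

end Dyadic

section Resonance

variable {k₁ k₂ k₃ : ℤ} {ξ₁ ξ₂ : ℝ}

lemma two_zpow_le_abs_Ωres (h₁ : ξ₁ ∈ Idy k₁) (h₂ : ξ₂ ∈ Idy k₂) (h₃ : ξ₁ + ξ₂ ∈ Idy k₃) :
    (2 : ℝ) ^ (k₁ + k₂ + k₃ - max k₁ (max k₂ k₃) - 1) ≤ |Ωres ξ₁ ξ₂| := by
  set K := k₁ + k₂ + k₃ - max k₁ (max k₂ k₃)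
  have hpair : ∀ {a b : ℤ} {x y : ℝ}, x ∈ Idy a → y ∈ Idy b → K ≤ a + b →
      (2 : ℝ) ^ (K - 2) ≤ |x| * |y| := fun hx hy hab =>
    (zpow_le_zpow_right₀ one_le_two (by omega)).trans (two_zpow_le_abs_mul_abs_of_mem_Idy hx hy)
  rw [abs_Ωres, show K - 1 = K - 2 + 1 by ring, zpow_add_one₀ two_ne_zero, mul_comm]
  gcongr
  exact le_min (hpair h₁ h₂ (by omega)) (le_min (hpair h₁ h₃ (by omega)) (hpair h₂ h₃ (by omega)))

lemma abs_Ωres_le_two_zpow (h₁ : ξ₁ ∈ Idy k₁) (h₂ : ξ₂ ∈ Idy k₂) (h₃ : ξ₁ + ξ₂ ∈ Idy k₃) :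
    |Ωres ξ₁ ξ₂| ≤ (2 : ℝ) ^ (k₁ + k₂ + k₃ - max k₁ (max k₂ k₃) + 3) := by
  rw [abs_Ωres, show k₁ + k₂ + k₃ - max k₁ (max k₂ k₃) + 3 =
    k₁ + k₂ + k₃ - max k₁ (max k₂ k₃) + 2 + 1 by ring, zpow_add_one₀ two_ne_zero, mul_comm _ 2]
  gcongr
  rcases (by omega : k₁ + k₂ + k₃ - max k₁ (max k₂ k₃) = k₁ + k₂ ∨
      k₁ + k₂ + k₃ - max k₁ (max k₂ k₃) = k₁ + k₃ ∨
      k₁ + k₂ + k₃ - max k₁ (max k₂ k₃) = k₂ + k₃) with hK | hK | hK <;> rw [hK]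
  · exact (min_le_left _ _).trans (abs_mul_abs_le_two_zpow_of_mem_Idy h₁ h₂)
  · exact (min_le_right _ _).trans <|
      (min_le_left _ _).trans (abs_mul_abs_le_two_zpow_of_mem_Idy h₁ h₃)
  · exact (min_le_right _ _).trans <|
      (min_le_right _ _).trans (abs_mul_abs_le_two_zpow_of_mem_Idy h₂ h₃)

end Resonance

section Modulation

variable {j : ℕ} {μ : ℝ}

lemma abs_le_two_zpow_of_mem_Itil (h : μ ∈ Itil j) : |μ| ≤ (2 : ℝ) ^ ((j : ℤ) + 1) := by
  unfold Itil at h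
  split_ifs at h with hj
  · subst hj
    simpa [abs_le] using h
  · exact h.2

lemma two_zpow_le_abs_of_mem_Itil (h : μ ∈ Itil j) (hj : j ≠ 0) :
    (2 : ℝ) ^ ((j : ℤ) - 1) ≤ |μ| := by
  rw [Itil, if_neg hj] at h
  exact h.1

end Modulation

lemma abs_sub_sub_le (a b c : ℝ) : |a - b - c| ≤ |a| + |b| + |c| :=
  (abs_sub _ _).trans (by gcongr; exact abs_sub a b)

lemma lt_max_add_two_of_abs_le {x a b c : ℝ} {n p q r : ℤ} (hx : (2 : ℝ) ^ n ≤ |x|)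
    (ha : |a| ≤ (2 : ℝ) ^ p) (hb : |b| ≤ (2 : ℝ) ^ q) (hc : |c| ≤ (2 : ℝ) ^ r)
    (h : |x| ≤ |a| + |b| + |c|) : n < max p (max q r) + 2 := by
  set M := max p (max q r)
  have hM : ∀ e ≤ M, (2 : ℝ) ^ e ≤ 2 ^ M := fun e he => zpow_le_zpow_right₀ one_le_two he
  have ha' := ha.trans (hM p (by omega))
  have hb' := hb.trans (hM q (by omega))
  have hc' := hc.trans (hM r (by omega))
  rw [← zpow_lt_zpow_iff_right₀ (one_lt_two : (1 : ℝ) < 2)]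
  calc (2 : ℝ) ^ n ≤ 3 * 2 ^ M := by linarith
    _ < 2 ^ (M + 2) := by
      rw [zpow_add₀ two_ne_zero]
      norm_num
      linarith [zpow_pos (two_pos : (0 : ℝ) < 2) M]

theorem modulation_constraint (k₁ k₂ k₃ : ℤ) (j₁ j₂ j₃ : ℕ) (f g h : ℝ × ℝ → ℂ)
    (hf : Function.support f ⊆ Idy k₁ ×ˢ Itil j₁)
    (hg : Function.support g ⊆ Idy k₂ ×ˢ Itil j₂)
    (hh : Function.support h ⊆ Idy k₃ ×ˢ Itil j₃)
    (hJ : J f g h ≠ 0) :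
    ((max j₁ (max j₂ j₃) : ℤ) ∈
        Set.Icc (k₁ + k₂ + k₃ - max k₁ (max k₂ k₃) - 5)
          (k₁ + k₂ + k₃ - max k₁ (max k₂ k₃) + 5)) ∨
      (k₁ + k₂ + k₃ - max k₁ (max k₂ k₃) + 5 ≤ (max j₁ (max j₂ j₃) : ℤ) ∧
        (max j₁ (max j₂ j₃) : ℤ) -
            ((j₁ : ℤ) + j₂ + j₃ - max j₁ (max j₂ j₃) - min j₁ (min j₂ j₃)) ≤ 5) := by
  obtain ⟨ξ₁, ξ₂, μ₁, μ₂, hf₀, hg₀, hh₀⟩ := exists_mem_support_of_J_ne_zero hJ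
  obtain ⟨hξ₁, hμ₁⟩ : ξ₁ ∈ Idy k₁ ∧ μ₁ ∈ Itil j₁ := hf hf₀
  obtain ⟨hξ₂, hμ₂⟩ : ξ₂ ∈ Idy k₂ ∧ μ₂ ∈ Itil j₂ := hg hg₀
  obtain ⟨hξ₃, hμ₃⟩ : ξ₁ + ξ₂ ∈ Idy k₃ ∧ μ₁ + μ₂ + Ωres ξ₁ ξ₂ ∈ Itil j₃ := hh hh₀
  have hΩ_lo := two_zpow_le_abs_Ωres hξ₁ hξ₂ hξ₃
  have hΩ_hi := abs_Ωres_le_two_zpow hξ₁ hξ₂ hξ₃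
  generalize Ωres ξ₁ ξ₂ = Ω at hΩ_lo hΩ_hi hμ₃
  generalize hμ₃_def : μ₁ + μ₂ + Ω = μ₃ at hμ₃
  have hb₁ := abs_le_two_zpow_of_mem_Itil hμ₁
  have hb₂ := abs_le_two_zpow_of_mem_Itil hμ₂
  have hb₃ := abs_le_two_zpow_of_mem_Itil hμ₃
  have tΩ : |Ω| ≤ |μ₃| + |μ₁| + |μ₂| := by
    rw [show Ω = μ₃ - μ₁ - μ₂ by linarith]; exact abs_sub_sub_le μ₃ μ₁ μ₂
  have t₁ : |μ₁| ≤ |μ₃| + |μ₂| + |Ω| := by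
    rw [show μ₁ = μ₃ - μ₂ - Ω by linarith]; exact abs_sub_sub_le μ₃ μ₂ Ω
  have t₂ : |μ₂| ≤ |μ₃| + |μ₁| + |Ω| := by
    rw [show μ₂ = μ₃ - μ₁ - Ω by linarith]; exact abs_sub_sub_le μ₃ μ₁ Ω
  have t₃ : |μ₃| ≤ |μ₁| + |μ₂| + |Ω| := hμ₃_def ▸ abs_add_three μ₁ μ₂ Ω
  have hΩ := lt_max_add_two_of_abs_le hΩ_lo hb₃ hb₁ hb₂ tΩ
  have h₁ : j₁ ≠ 0 → _ := fun hj =>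
    lt_max_add_two_of_abs_le (two_zpow_le_abs_of_mem_Itil hμ₁ hj) hb₃ hb₂ hΩ_hi t₁
  have h₂ : j₂ ≠ 0 → _ := fun hj =>
    lt_max_add_two_of_abs_le (two_zpow_le_abs_of_mem_Itil hμ₂ hj) hb₃ hb₁ hΩ_hi t₂
  have h₃ : j₃ ≠ 0 → _ := fun hj =>
    lt_max_add_two_of_abs_le (two_zpow_le_abs_of_mem_Itil hμ₃ hj) hb₁ hb₂ hΩ_hi t₃
  rw [Set.mem_Icc]
  omega
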